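/- arXiv:2210.15223 — 8 statements merged into one kernel-verified Lean document; each statement's English description precedes it below -/
import Mathlib

section
/- Every C_n lattice is atomistic: every element of a C_n lattice is the join of the atoms contained in it. -/
/-!
Every point `x` of the ground set lies in an atom: the covers of `∅` cover `E \ ∅* = E`, unless
`E` itself is an atom. If moreover `x ∈ A ∈ L`, then the intersection of that atom with `A` lies
in `L`, is nonempty and sits below the atom, so it is the atom, which is therefore contained in `A`.
-/

open Finset

variable {α : Type*} [DecidableEq α] [Fintype α]

/-- `B` covers `A` in the family `L` of subsets ordered by inclusion. -/
def CovIn (L : Set (Finset α)) (A B : Finset α) : Prop :=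
  A ∈ L ∧ B ∈ L ∧ A ⊂ B ∧ ∀ C ∈ L, A ⊆ C → C ⊆ B → C = A ∨ C = B

/-- An atom of the family `L`: an element covering the least element `∅`. -/
def IsAtomIn (L : Set (Finset α)) (A : Finset α) : Prop := CovIn L ∅ A

/-- A `C_n` lattice on ground set `E` with (fixed-point-free) involution `star`. -/
structure IsCnLattice (star : α → α) (E : Finset α) (L : Set (Finset α)) : Prop where
  star_invol : Function.Involutive star
  star_ne : ∀ x, star x ≠ x
  star_mem : ∀ x ∈ E, star x ∈ E
  subset_ground : ∀ A ∈ L, A ⊆ E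
  empty_mem : (∅ : Finset α) ∈ L
  ground_mem : E ∈ L
  admissible : ∀ A ∈ L, A ≠ E → A ∩ A.image star = ∅
  inter_mem : ∀ A ∈ L, ∀ B ∈ L, A ∩ B ∈ L
  covers_inter : ∀ A ∈ L, ¬ CovIn L A E →
    ∀ B C, CovIn L A B → CovIn L A C → B ≠ C → B ∩ C = A
  covers_union : ∀ A ∈ L, ¬ CovIn L A E →
    ∀ x, x ∈ E \ A.image star ↔ ∃ B, CovIn L A B ∧ x ∈ B

/-- A maximal chain from `A` to `B` in `L`: a list of successive covers starting
at `A` and ending at `B`. -/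
def IsMaxChainIn (L : Set (Finset α)) (A B : Finset α) (c : List (Finset α)) : Prop :=
  c.Chain' (CovIn L) ∧ c.head? = some A ∧ c.getLast? = some B

omit [Fintype α] in
theorem IsAtomIn.subset_of_mem {L : Set (Finset α)} {A B : Finset α} {x : α}
    (hB : IsAtomIn L B) (hBA : B ∩ A ∈ L) (hxB : x ∈ B) (hxA : x ∈ A) : B ⊆ A := by
  have hne : (B ∩ A).Nonempty := ⟨x, mem_inter.2 ⟨hxB, hxA⟩⟩
  exact inter_eq_left.1
    ((hB.2.2.2 _ hBA (empty_subset _) inter_subset_left).resolve_left hne.ne_empty)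

omit [Fintype α] in
theorem IsCnLattice.exists_isAtomIn_mem {star : α → α} {E : Finset α} {L : Set (Finset α)}
    (h : IsCnLattice star E L) {x : α} (hx : x ∈ E) :
    ∃ B, IsAtomIn L B ∧ x ∈ B := by
  by_cases hE : IsAtomIn L E
  · exact ⟨E, hE, hx⟩
  · exact (h.covers_union ∅ h.empty_mem hE x).1 (by simpa using hx)

/-- Every `C_n` lattice is atomistic: every element is the join of
the atoms contained in it (equivalently, since the join of elements of `L` contained
in `A ∈ L` is at most `A`, the element `A` is the union of the atoms contained in it). -/
theorem cn_atomistic (star : α → α) (E : Finset α) (L : Set (Finset α))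
    (h : IsCnLattice star E L) (A : Finset α) (hA : A ∈ L) :
    ∀ x, x ∈ A ↔ ∃ B, IsAtomIn L B ∧ B ⊆ A ∧ x ∈ B := by
  intro x
  refine ⟨fun hx => ?_, fun ⟨B, _, hBA, hxB⟩ => hBA hxB⟩
  obtain ⟨B, hB, hxB⟩ := h.exists_isAtomIn_mem (h.subset_ground A hA hx)
  exact ⟨B, hB, hB.subset_of_mem (h.inter_mem B hB.2.1 A hA) hxB hx, hxB⟩
end

section
/- Every C_n lattice is graded: for any two elements A < B of a C_n lattice, all maximal chains from A to B have the same length. -/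
open Finset

variable {α : Type*} [DecidableEq α] [Fintype α]

/-!
Jordan–Dedekind: extending both chains by one maximal chain from `B` to the top `E`, it suffices
to compare maximal chains ending at `E`, and by induction from the top it suffices that any two
covers of an element `A` are joined by a path of covers of `A` in which consecutive ones have a
common upper cover.

In a `C_n` lattice let `X ≠ Y` cover `A`, and write `S*` for `S.image star`. If some cover of `A`
is covered by `E`, all are, and `E` is a common upper cover. Otherwise, if `Y \ A ⊄ X*`, the cover
axiom at `X` gives an upper cover of `X` containing `Y`. If also `X \ A ⊄ Y*`, the upper cover of
`Y` containing `X` obtained in the same way is the same set; if instead `X \ A ⊆ Y*`, the upper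
cover of `X` contains some `x` together with `x*`, so it is `E`, which was excluded. When both
`X \ A ⊆ Y*` and `Y \ A ⊆ X*`, the cover axiom shows that `A` has a third cover, and it has a
common upper cover with each of `X` and `Y`.
-/

open Relation

section Covers

omit [DecidableEq α] [Fintype α]

variable {L : Set (Finset α)} {A B C D E X Y : Finset α} {c d : List (Finset α)}

theorem CovIn.mem_left (h : CovIn L A B) : A ∈ L := h.1

theorem CovIn.mem_right (h : CovIn L A B) : B ∈ L := h.2.1

theorem CovIn.ssubset (h : CovIn L A B) : A ⊂ B := h.2.2.1

theorem CovIn.eq_or_eq (h : CovIn L A B) (hC : C ∈ L) (hAC : A ⊆ C) (hCB : C ⊆ B) :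
    C = A ∨ C = B :=
  h.2.2.2 C hC hAC hCB

theorem CovIn.not_subset (hX : CovIn L A X) (hY : CovIn L A Y) (hXY : X ≠ Y) : ¬ Y ⊆ X :=
  fun hYX => (hX.eq_or_eq hY.mem_right hY.ssubset.subset hYX).elim hY.ssubset.ne' hXY.symm

theorem CovIn.ne_of_not_covIn (hB : CovIn L A B) (hAE : ¬ CovIn L A E) : B ≠ E :=
  fun hBE => hAE (hBE ▸ hB)

theorem IsMaxChainIn.singleton : IsMaxChainIn L A A [A] :=
  ⟨List.isChain_singleton A, rfl, rfl⟩

theorem IsMaxChainIn.cons (hc : IsMaxChainIn L B D c) (hAB : CovIn L A B) :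
    IsMaxChainIn L A D (A :: c) := by
  obtain ⟨hc, hcB, hcD⟩ := hc
  obtain ⟨t, rfl⟩ : ∃ t, c = B :: t := by
    cases c <;> simp_all
  exact ⟨List.isChain_cons_cons.mpr ⟨hAB, hc⟩, rfl, by rwa [List.getLast?_cons_cons]⟩

theorem IsMaxChainIn.exists_eq_cons (hc : IsMaxChainIn L A D c) (hAD : A ≠ D) :
    ∃ B d, c = A :: d ∧ CovIn L A B ∧ IsMaxChainIn L B D d := by
  obtain ⟨hc, hcA, hcD⟩ := hc
  match c, hcA with
  | [_], rfl => exact absurd (by simpa using hcD) hAD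
  | _ :: B :: t, rfl =>
    rw [List.getLast?_cons_cons] at hcD
    exact ⟨B, B :: t, rfl, (List.isChain_cons_cons.mp hc).1, hc.tail, rfl, hcD⟩

theorem IsMaxChainIn.eq_singleton (hsub : ∀ X ∈ L, X ⊆ E) (hc : IsMaxChainIn L E E c) :
    c = [E] := by
  obtain ⟨hc, hcE, -⟩ := hc
  match c, hcE with
  | [_], rfl => rfl
  | _ :: B :: _, rfl =>
    have hEB : CovIn L E B := (List.isChain_cons_cons.mp hc).1
    exact absurd (hsub B hEB.mem_right) hEB.ssubset.not_subset

theorem IsMaxChainIn.append (hc : IsMaxChainIn L A B c) (hd : IsMaxChainIn L B D d) :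
    IsMaxChainIn L A D (c ++ d.tail) := by
  obtain ⟨hc, hcA, hcB⟩ := hc
  obtain ⟨hd, hdB, hdD⟩ := hd
  obtain ⟨t, rfl⟩ : ∃ t, d = B :: t := by
    cases d <;> simp_all
  refine ⟨hc.append hd.tail ?_, by simp [List.head?_append, hcA], ?_⟩
  · intro x hx y hy
    rw [hcB, Option.mem_some_iff] at hx
    exact hx ▸ hd.rel_head? hy
  · cases t with
    | nil => simpa [List.getLast?_append, hcB] using hdD
    | cons => simpa [List.getLast?_append] using hdD

def CoverLink (L : Set (Finset α)) (A X Y : Finset α) : Prop :=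
  CovIn L A X ∧ CovIn L A Y ∧ ∃ Z, CovIn L X Z ∧ CovIn L Y Z

theorem CoverLink.symm (h : CoverLink L A X Y) : CoverLink L A Y X :=
  ⟨h.2.1, h.1, h.2.2.imp fun _ => And.symm⟩

end Covers

section Finite

omit [DecidableEq α]

variable {L : Set (Finset α)} {A D E X : Finset α}

theorem exists_covIn_subset (hX : X ∈ L) (hD : D ∈ L) (hXD : X ⊂ D) :
    ∃ U, CovIn L X U ∧ U ⊆ D := by
  obtain ⟨U, hmin⟩ :=
    (Set.toFinite {C | C ∈ L ∧ X ⊂ C ∧ C ⊆ D}).exists_minimal ⟨D, hD, hXD, subset_rfl⟩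
  obtain ⟨hU, hXU, hUD⟩ := hmin.prop
  refine ⟨U, ⟨hX, hU, hXU, fun C hC hXC hCU => ?_⟩, hUD⟩
  rcases hXC.eq_or_ssubset with rfl | hXC
  · exact Or.inl rfl
  · exact Or.inr (hmin.eq_of_le ⟨hC, hXC, hCU.trans hUD⟩ hCU)

theorem exists_isMaxChainIn (hX : X ∈ L) (hD : D ∈ L) (hXD : X ⊆ D) :
    ∃ c, IsMaxChainIn L X D c := by
  induction X using WellFoundedGT.induction with
  | _ X ih =>
    rcases hXD.eq_or_ssubset with rfl | hlt
    · exact ⟨[X], .singleton⟩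
    obtain ⟨U, hU, hUD⟩ := exists_covIn_subset hX hD hlt
    obtain ⟨c, hc⟩ := ih U hU.ssubset hU.mem_right hUD
    exact ⟨X :: c, hc.cons hU⟩

theorem IsMaxChainIn.length_eq_of_coverLink (hE : E ∈ L) (hsub : ∀ X ∈ L, X ⊆ E)
    (hlink : ∀ A C₁ C₂, CovIn L A C₁ → CovIn L A C₂ → ReflTransGen (CoverLink L A) C₁ C₂)
    {c₁ c₂ : List (Finset α)} (hc₁ : IsMaxChainIn L A E c₁) (hc₂ : IsMaxChainIn L A E c₂) :
    c₁.length = c₂.length := by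
  induction A using WellFoundedGT.induction generalizing c₁ c₂ with
  | _ A ih =>
    by_cases hAE : A = E
    · subst hAE
      rw [hc₁.eq_singleton hsub, hc₂.eq_singleton hsub]
    obtain ⟨C₁, d₁, rfl, hC₁, hd₁⟩ := hc₁.exists_eq_cons hAE
    obtain ⟨C₂, d₂, rfl, hC₂, hd₂⟩ := hc₂.exists_eq_cons hAE
    have linked : ∀ X Y, ReflTransGen (CoverLink L A) X Y → CovIn L A X →
        ∀ d d', IsMaxChainIn L X E d → IsMaxChainIn L Y E d' → d.length = d'.length := by
      intro X Y hXY hX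
      induction hXY with
      | refl => exact fun d d' => ih X hX.ssubset
      | @tail W Y _ hWY ihXW =>
        obtain ⟨hW, hY, Z, hWZ, hYZ⟩ := hWY
        obtain ⟨e, he⟩ := exists_isMaxChainIn hWZ.mem_right hE (hsub Z hWZ.mem_right)
        intro d d' hd hd'
        calc d.length = (W :: e).length := ihXW d _ hd (he.cons hWZ)
          _ = (Y :: e).length := rfl
          _ = d'.length := ih Y hY.ssubset (he.cons hYZ) hd'
    simpa using linked C₁ C₂ (hlink A C₁ C₂ hC₁ hC₂) hC₁ d₁ d₂ hd₁ hd₂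

end Finite

namespace IsCnLattice

variable {star : α → α} {E : Finset α} {L : Set (Finset α)} {A B V W X Y : Finset α} {x : α}

section

omit [Fintype α]

theorem mem_image_star (h : IsCnLattice star E L) : x ∈ B.image star ↔ star x ∈ B := by
  simp [h.star_invol.eq_iff]

theorem eq_ground_of_mem_of_star_mem (h : IsCnLattice star E L) (hV : V ∈ L) (hx : x ∈ V)
    (hsx : star x ∈ V) : V = E := by
  by_contra hVE
  have hx' : x ∈ V ∩ V.image star := mem_inter.mpr ⟨hx, h.mem_image_star.mpr hsx⟩
  simp [h.admissible V hV hVE] at hx'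

theorem star_notMem_of_subset (h : IsCnLattice star E L) (hV : V ∈ L) (hVE : V ≠ E)
    (hAV : A ⊆ V) (hx : x ∈ V) : star x ∉ A :=
  fun hsx => hVE (h.eq_ground_of_mem_of_star_mem hV hx (hAV hsx))

theorem subset_of_covIn_of_mem (h : IsCnLattice star E L) (hB : CovIn L A B) (hV : V ∈ L)
    (hAV : A ⊆ V) (hxB : x ∈ B) (hxV : x ∈ V) (hxA : x ∉ A) : B ⊆ V := by
  rcases hB.eq_or_eq (h.inter_mem B hB.mem_right V hV) (subset_inter hB.ssubset.subset hAV)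
    inter_subset_left with hBV | hBV
  · exact absurd (hBV ▸ mem_inter.mpr ⟨hxB, hxV⟩) hxA
  · exact hBV ▸ inter_subset_right

theorem exists_covIn_superset (h : IsCnLattice star E L)
    (hX : CovIn L A X) (hY : CovIn L A Y) (hYX : ¬ Y \ A ⊆ X.image star) :
    ∃ W, CovIn L X W ∧ Y ⊆ W := by
  by_cases hXE : CovIn L X E
  · exact ⟨E, hXE, h.subset_ground Y hY.mem_right⟩
  obtain ⟨y, hy, hyX⟩ := not_subset.mp hYX
  obtain ⟨hyY, hyA⟩ := mem_sdiff.mp hy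
  obtain ⟨W, hXW, hyW⟩ := (h.covers_union X hX.mem_right hXE y).mp
    (mem_sdiff.mpr ⟨h.subset_ground Y hY.mem_right hyY, hyX⟩)
  exact ⟨W, hXW, h.subset_of_covIn_of_mem hY hXW.mem_right
    (hX.ssubset.subset.trans hXW.ssubset.subset) hyY hyW hyA⟩

theorem star_notMem_of_covIn (h : IsCnLattice star E L) (hAE : ¬ CovIn L A E)
    (hB : CovIn L A B) (hx : x ∈ B) : star x ∉ A :=
  h.star_notMem_of_subset hB.mem_right (hB.ne_of_not_covIn hAE) hB.ssubset.subset hx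

theorem ssubset_ground_of_covIn (h : IsCnLattice star E L) (hAE : ¬ CovIn L A E)
    (hB : CovIn L A B) : B ⊂ E :=
  (h.subset_ground B hB.mem_right).ssubset_of_ne (hB.ne_of_not_covIn hAE)

theorem coverLink_or_covIn_ground (h : IsCnLattice star E L) (hX : CovIn L A X)
    (hY : CovIn L A Y) (hXY : X ≠ Y) (hYX : ¬ Y \ A ⊆ X.image star) :
    CoverLink L A X Y ∨ CovIn L X E := by
  obtain ⟨W, hXW, hYW⟩ := h.exists_covIn_superset hX hY hYX
  by_cases hXY' : X \ A ⊆ Y.image star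
  · right
    obtain ⟨x, hxX, hxA⟩ := exists_of_ssubset hX.ssubset
    have hsx : star x ∈ Y := h.mem_image_star.mp (hXY' (mem_sdiff.mpr ⟨hxX, hxA⟩))
    rwa [← h.eq_ground_of_mem_of_star_mem hXW.mem_right (hXW.ssubset.subset hxX) (hYW hsx)]
  · left
    obtain ⟨W', hYW', hXW'⟩ := h.exists_covIn_superset hY hX hXY'
    have hWW' : W ∩ W' ∈ L := h.inter_mem W hXW.mem_right W' hYW'.mem_right
    have hXWW' : X ⊆ W ∩ W' := subset_inter hXW.ssubset.subset hXW'
    have hYWW' : Y ⊆ W ∩ W' := subset_inter hYW hYW'.ssubset.subset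
    have hW : W ∩ W' = W := (hXW.eq_or_eq hWW' hXWW' inter_subset_left).resolve_left
      fun e => hX.not_subset hY hXY (e ▸ hYWW')
    have hW' : W ∩ W' = W' := (hYW'.eq_or_eq hWW' hYWW' inter_subset_right).resolve_left
      fun e => hY.not_subset hX hXY.symm (e ▸ hXWW')
    exact ⟨hX, hY, W, hXW, hW'.symm.trans hW ▸ hYW'⟩

theorem subset_image_of_covIn_ground (h : IsCnLattice star E L) (hY : CovIn L A Y)
    (hYE : CovIn L Y E) (hB : CovIn L A B) (hBE : ¬ CovIn L B E) :
    Y \ A ⊆ B.image star := by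
  by_contra hYB
  obtain ⟨W, hBW, hYW⟩ := h.exists_covIn_superset hB hY hYB
  rcases hYE.eq_or_eq hBW.mem_right hYW (h.subset_ground W hBW.mem_right) with rfl | rfl
  · rcases hY.eq_or_eq hB.mem_right hB.ssubset.subset hBW.ssubset.subset with hBA | hBY
    · exact hB.ssubset.ne' hBA
    · exact hBW.ssubset.ne hBY
  · exact hBE hBW

theorem exists_covIn_ne_subset (h : IsCnLattice star E L) (hAE : ¬ CovIn L A E)
    (hB : CovIn L A B) (hBV : CovIn L B V) (hVE : V ≠ E) :
    ∃ B', CovIn L A B' ∧ B' ≠ B ∧ B' ⊆ V := by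
  obtain ⟨v, hvV, hvB⟩ := exists_of_ssubset hBV.ssubset
  have hAV : A ⊆ V := hB.ssubset.subset.trans hBV.ssubset.subset
  have hv : v ∈ E \ A.image star := mem_sdiff.mpr ⟨h.subset_ground V hBV.mem_right hvV,
    h.mem_image_star.not.mpr (h.star_notMem_of_subset hBV.mem_right hVE hAV hvV)⟩
  obtain ⟨B', hB', hvB'⟩ := (h.covers_union A hB.mem_left hAE v).mp hv
  exact ⟨B', hB', fun e => hvB (e ▸ hvB'), h.subset_of_covIn_of_mem hB' hBV.mem_right hAV
    hvB' hvV fun hvA => hvB (hB.ssubset.subset hvA)⟩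

theorem not_subset_image_of_subset_image (h : IsCnLattice star E L) (hAE : ¬ CovIn L A E)
    (hX : CovIn L A X) (hY : CovIn L A Y) (hW : CovIn L A W) (hWY : W ≠ Y)
    (hXY : X \ A ⊆ Y.image star) :
    ¬ W \ A ⊆ X.image star ∧ ¬ X \ A ⊆ W.image star := by
  have hWY' : W ∩ Y = A := h.covers_inter A hX.mem_left hAE W Y hW hY hWY
  constructor
  · intro hWX
    obtain ⟨w, hwW, hwA⟩ := exists_of_ssubset hW.ssubset
    have hsw : star w ∈ X \ A := mem_sdiff.mpr
      ⟨h.mem_image_star.mp (hWX (mem_sdiff.mpr ⟨hwW, hwA⟩)), h.star_notMem_of_covIn hAE hW hwW⟩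
    have hwY : w ∈ Y := by simpa [h.star_invol w] using h.mem_image_star.mp (hXY hsw)
    exact hwA (hWY' ▸ mem_inter.mpr ⟨hwW, hwY⟩)
  · intro hXW
    obtain ⟨x, hxX, hxA⟩ := exists_of_ssubset hX.ssubset
    have hx : x ∈ X \ A := mem_sdiff.mpr ⟨hxX, hxA⟩
    have hsx : star x ∈ W ∩ Y :=
      mem_inter.mpr ⟨h.mem_image_star.mp (hXW hx), h.mem_image_star.mp (hXY hx)⟩
    exact h.star_notMem_of_covIn hAE hX hxX (hWY' ▸ hsx)

end

-- An upper cover `V ≠ E` of `B` contains a second cover `B'` of `A`, and both `B*` and `B'*`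
-- would contain `Y \ A`, although `B ∩ B' = A`.
theorem covIn_ground_of_covIn_ground (h : IsCnLattice star E L) (hAE : ¬ CovIn L A E)
    (hY : CovIn L A Y) (hYE : CovIn L Y E) (hB : CovIn L A B) : CovIn L B E := by
  by_contra hBE
  obtain ⟨V, hBV, -⟩ :=
    exists_covIn_subset hB.mem_right h.ground_mem (h.ssubset_ground_of_covIn hAE hB)
  have hVE : V ≠ E := hBV.ne_of_not_covIn hBE
  obtain ⟨B', hB', hB'B, hB'V⟩ := h.exists_covIn_ne_subset hAE hB hBV hVE
  have hB'E : ¬ CovIn L B' E := by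
    intro hB'E
    rcases hB'E.eq_or_eq hBV.mem_right hB'V (h.subset_ground V hBV.mem_right) with hV | hV
    · exact hB'.not_subset hB hB'B (hV ▸ hBV.ssubset.subset)
    · exact hVE hV
  obtain ⟨y, hyY, hyA⟩ := exists_of_ssubset hY.ssubset
  have hy : y ∈ Y \ A := mem_sdiff.mpr ⟨hyY, hyA⟩
  have hsy : star y ∈ B ∩ B' := mem_inter.mpr
    ⟨h.mem_image_star.mp (h.subset_image_of_covIn_ground hY hYE hB hBE hy),
      h.mem_image_star.mp (h.subset_image_of_covIn_ground hY hYE hB' hB'E hy)⟩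
  rw [h.covers_inter A hB.mem_left hAE B B' hB hB' hB'B.symm] at hsy
  exact h.star_notMem_of_covIn hAE hY hyY hsy

theorem covIn_ground_of_forall_covIn_eq (h : IsCnLattice star E L) (hAE : ¬ CovIn L A E)
    (hX : CovIn L A X) (hY : CovIn L A Y) (hYX : Y \ A ⊆ X.image star)
    (honly : ∀ W, CovIn L A W → W ≠ X → W = Y) : CovIn L X E := by
  by_contra hXE
  obtain ⟨V, hXV, -⟩ :=
    exists_covIn_subset hX.mem_right h.ground_mem (h.ssubset_ground_of_covIn hAE hX)
  have hVE : V ≠ E := hXV.ne_of_not_covIn hXE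
  obtain ⟨B', hB', hB'X, hB'V⟩ := h.exists_covIn_ne_subset hAE hX hXV hVE
  obtain rfl : B' = Y := honly B' hB' hB'X
  obtain ⟨y, hyY, hyA⟩ := exists_of_ssubset hY.ssubset
  have hsy : star y ∈ X := h.mem_image_star.mp (hYX (mem_sdiff.mpr ⟨hyY, hyA⟩))
  exact hVE (h.eq_ground_of_mem_of_star_mem hXV.mem_right (hB'V hyY) (hXV.ssubset.subset hsy))

theorem reflTransGen_coverLink (h : IsCnLattice star E L) (hX : CovIn L A X)
    (hY : CovIn L A Y) : ReflTransGen (CoverLink L A) X Y := by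
  by_cases hAE : CovIn L A E
  · have top : ∀ {C}, CovIn L A C → C = E := fun hC =>
      (hAE.eq_or_eq hC.mem_right hC.ssubset.subset (h.subset_ground _ hC.mem_right)).resolve_left
        hC.ssubset.ne'
    rw [top hX, top hY]
  by_cases hXY : X = Y
  · rw [hXY]
  by_cases htop : ∃ W, CovIn L A W ∧ CovIn L W E
  · obtain ⟨W, hW, hWE⟩ := htop
    exact .single ⟨hX, hY, E, h.covIn_ground_of_covIn_ground hAE hW hWE hX,
      h.covIn_ground_of_covIn_ground hAE hW hWE hY⟩
  have hnot : ∀ W, CovIn L A W → ¬ CovIn L W E := fun W hW hWE => htop ⟨W, hW, hWE⟩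
  by_cases hYX : Y \ A ⊆ X.image star
  swap
  · exact .single ((h.coverLink_or_covIn_ground hX hY hXY hYX).resolve_right (hnot X hX))
  by_cases hXY' : X \ A ⊆ Y.image star
  swap
  · exact .single ((h.coverLink_or_covIn_ground hY hX (Ne.symm hXY) hXY').resolve_right
      (hnot Y hY)).symm
  obtain ⟨W, hW, hWX, hWY⟩ : ∃ W, CovIn L A W ∧ W ≠ X ∧ W ≠ Y := by
    by_contra! honly
    exact hnot X hX (h.covIn_ground_of_forall_covIn_eq hAE hX hY hYX honly)
  have hWX' := (h.not_subset_image_of_subset_image hAE hX hY hW hWY hXY').1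
  have hYW' := (h.not_subset_image_of_subset_image hAE hY hX hW hWX hYX).2
  exact .tail
    (.single ((h.coverLink_or_covIn_ground hX hW (Ne.symm hWX) hWX').resolve_right (hnot X hX)))
    ((h.coverLink_or_covIn_ground hW hY hWY hYW').resolve_right (hnot W hW))

end IsCnLattice

theorem cn_graded_general (star : α → α) (E : Finset α) (L : Set (Finset α))
    (h : IsCnLattice star E L) (A B : Finset α) (hB : B ∈ L)
    (c₁ c₂ : List (Finset α))
    (hc₁ : IsMaxChainIn L A B c₁) (hc₂ : IsMaxChainIn L A B c₂) :
    c₁.length = c₂.length := by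
  obtain ⟨d, hd⟩ := exists_isMaxChainIn hB h.ground_mem (h.subset_ground B hB)
  have := (hc₁.append hd).length_eq_of_coverLink h.ground_mem h.subset_ground
    (fun _ _ _ => h.reflTransGen_coverLink) (hc₂.append hd)
  simpa using this

/-- Every `C_n` lattice is graded: for any two elements `A < B` of the
lattice, all maximal chains from `A` to `B` have the same length. -/
theorem cn_graded (star : α → α) (E : Finset α) (L : Set (Finset α))
    (h : IsCnLattice star E L) (A B : Finset α) (hA : A ∈ L) (hB : B ∈ L) (hAB : A ⊂ B)
    (c₁ c₂ : List (Finset α))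
    (hc₁ : IsMaxChainIn L A B c₁) (hc₂ : IsMaxChainIn L A B c₂) :
    c₁.length = c₂.length :=
  cn_graded_general star E L h A B hB c₁ c₂ hc₁ hc₂
end

section
/- In a finite bounded lattice 𝓛 with a linear order ω on its atoms for which a set I of atoms is NBB, if the rank of the join of I \ {a} equals the rank of the join of I for every a ∈ I, then I is not NBB for any linear order; equivalently, every NBB set I (for some linear order) contains an atom a with rank(⋁(I \ {a})) < rank(⋁I). -/
variable {L : Type*} [Lattice L] [BoundedOrder L] [Fintype L] [DecidableEq L]

/-- The set `D` of atoms is bounded below (BB) with respect to the strict order `ω`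
on the atoms: `D` is nonempty and some atom `a` is a strict `ω`-lower bound of every
element of `D` with `a ≤ ⋁ D`. -/
def BddBel (ω : {a : L // IsAtom a} → {a : L // IsAtom a} → Prop)
    (D : Finset {a : L // IsAtom a}) : Prop :=
  D.Nonempty ∧ ∃ a : {a : L // IsAtom a}, (∀ d ∈ D, ω a d) ∧
    (a : L) ≤ D.sup (Subtype.val)

/-- `B` is NBB with respect to `ω` if it contains no bounded below subset. -/
def IsNBB (ω : {a : L // IsAtom a} → {a : L // IsAtom a} → Prop)
    (B : Finset {a : L // IsAtom a}) : Prop :=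
  ∀ D ⊆ B, ¬ BddBel ω D

/-- A set of atoms is independent if it is NBB for some linear (strict total) order
on the atoms. -/
def IndepSet (B : Finset {a : L // IsAtom a}) : Prop :=
  ∃ ω : {a : L // IsAtom a} → {a : L // IsAtom a} → Prop,
    IsStrictTotalOrder _ ω ∧ IsNBB ω B

/-- `r` is the rank function of the graded lattice `L`. -/
def IsRankFn (r : L → ℕ) : Prop :=
  r ⊥ = 0 ∧ ∀ a b : L, a ⋖ b → r b = r a + 1

/-- `L` is atomistic: every element is a join of atoms. -/
def AtomisticL (L : Type*) [Lattice L] [BoundedOrder L] [DecidableEq L] : Prop :=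
  ∀ x : L, ∃ S : Finset {a : L // IsAtom a}, x = S.sup Subtype.val

/-
The `ω`-least atom `a` of `I` is a strict `ω`-lower bound of `I \ {a}`, so NBB forbids
`a ≤ ⋁(I \ {a})`. Hence removing `a` makes the join strictly smaller, and a rank
function is strictly monotone.
-/

omit [DecidableEq L] in
lemma IsRankFn.strictMono {r : L → ℕ} (hr : IsRankFn r) : StrictMono r := by
  classical
  let _ := Fintype.toLocallyFiniteOrder (α := L)
  exact (strictMono_iff_forall_covBy r).2 fun a b hab => by rw [hr.2 a b hab]; omega

lemma Finset.exists_rel_forall_mem_erase {α : Type*} [DecidableEq α] (r : α → α → Prop)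
    [IsStrictTotalOrder α r] {s : Finset α} (hs : s.Nonempty) : ∃ a ∈ s, ∀ d ∈ s.erase a, r a d := by
  classical
  let _ := linearOrderOfSTO r
  exact ⟨s.min' hs, s.min'_mem hs, fun d hd =>
    lt_of_le_of_ne (s.min'_le d (mem_of_mem_erase hd)) (ne_of_mem_erase hd).symm⟩

lemma Finset.sup_erase_lt_of_not_le {α β : Type*} [DecidableEq α] [SemilatticeSup β] [OrderBot β]
    {s : Finset α} {f : α → β} {a : α} (ha : a ∈ s) (h : ¬ f a ≤ (s.erase a).sup f) :
    (s.erase a).sup f < s.sup f := by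
  calc (s.erase a).sup f < f a ⊔ (s.erase a).sup f := right_lt_sup.2 h
    _ = s.sup f := by rw [← sup_insert, insert_erase ha]

omit [Fintype L] in
lemma IsNBB.not_le_sup_erase {ω : {a : L // IsAtom a} → {a : L // IsAtom a} → Prop}
    {I : Finset {a : L // IsAtom a}} (hI : IsNBB ω I) {a : {a : L // IsAtom a}}
    (ha : ∀ d ∈ I.erase a, ω a d) : ¬ (a : L) ≤ (I.erase a).sup Subtype.val := by
  intro hle
  rcases (I.erase a).eq_empty_or_nonempty with hempty | hne
  · rw [hempty, Finset.sup_empty] at hle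
    exact a.2.1 (le_bot_iff.mp hle)
  · exact hI _ (Finset.erase_subset a I) ⟨hne, a, ha, hle⟩

theorem indep_has_rank_dropping_atom_general (r : L → ℕ) (hr : IsRankFn r)
    (I : Finset {a : L // IsAtom a}) (hne : I.Nonempty)
    (hI : IndepSet I) :
    ∃ a ∈ I, r ((I.erase a).sup Subtype.val) < r (I.sup Subtype.val) := by
  obtain ⟨ω, hω, hnbb⟩ := hI
  obtain ⟨a, haI, hleast⟩ := Finset.exists_rel_forall_mem_erase ω hne
  exact ⟨a, haI, hr.strictMono <|
    Finset.sup_erase_lt_of_not_le haI (hnbb.not_le_sup_erase hleast)⟩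

/-- In a finite, bounded, atomistic, graded lattice, every (nonempty)
independent set `I` of atoms contains an atom `a` with
`rank(⋁(I \ {a})) < rank(⋁ I)`; equivalently, if the rank of the join of `I \ {a}`
equals the rank of the join of `I` for every `a ∈ I`, then `I` is NBB for no linear order. -/
theorem indep_has_rank_dropping_atom (r : L → ℕ) (hr : IsRankFn r)
    (hatom : AtomisticL L) (I : Finset {a : L // IsAtom a}) (hne : I.Nonempty)
    (hI : IndepSet I) :
    ∃ a ∈ I, r ((I.erase a).sup Subtype.val) < r (I.sup Subtype.val) :=
  indep_has_rank_dropping_atom_general r hr I hne hI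
end

section
/- In a finite, bounded, atomistic, graded lattice, every independent set I (i.e., set of atoms that is NBB for some linear order on the atoms) satisfies rank(⋁I) ≥ |I|. -/
variable {L : Type*} [Lattice L] [BoundedOrder L] [Fintype L] [DecidableEq L]

/-!
Order the atoms of `I` by the strict total order `ω` witnessing independence and remove the
`ω`-least atom `a`. The rest `I'` is again NBB, and `a ≰ ⋁ I'`, since otherwise `a` would bound
`I'` below. Hence `⋁ I' < ⋁ I`, the rank goes up by at least one, and induction on `|I|` concludes.
-/

theorem strictMono_of_covBy_imp_add_one {α : Type*} [PartialOrder α] [Finite α] {r : α → ℕ}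
    (hr : ∀ a b : α, a ⋖ b → r b = r a + 1) : StrictMono r := by
  let := LocallyFiniteOrder.ofFiniteIcc fun a b : α => Set.toFinite (Set.Icc a b)
  refine (strictMono_iff_forall_covBy r).2 fun a b hab => ?_
  rw [hr a b hab]
  exact Nat.lt_succ_self _

theorem Finset.Nonempty.exists_forall_rel_of_isStrictTotalOrder {α : Type*} [Finite α]
    [DecidableEq α] (ω : α → α → Prop) [IsStrictTotalOrder α ω] {s : Finset α} (hs : s.Nonempty) :
    ∃ a ∈ s, ∀ d ∈ s.erase a, ω a d := by
  obtain ⟨a, ha, hmin⟩ := (Finite.wellFounded_of_trans_of_irrefl ω).has_min s hs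
  refine ⟨a, ha, fun d hd => ?_⟩
  rcases trichotomous_of ω a d with h | rfl | h
  · exact h
  · exact absurd rfl (Finset.ne_of_mem_erase hd)
  · exact absurd h (hmin d (Finset.mem_of_mem_erase hd))

section NBB

variable {α : Type*} [Lattice α] [BoundedOrder α]
  {ω : {a : α // IsAtom a} → {a : α // IsAtom a} → Prop} {B : Finset {a : α // IsAtom a}}

theorem IsNBB.subset (hB : IsNBB ω B) {D : Finset {a : α // IsAtom a}} (hD : D ⊆ B) :
    IsNBB ω D :=
  fun D' hD' => hB D' (hD'.trans hD)

theorem IsNBB.not_le_sup_erase_s7 [DecidableEq α] (hB : IsNBB ω B) {a : {a : α // IsAtom a}}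
    (hleast : ∀ d ∈ B.erase a, ω a d) :
    ¬ (a : α) ≤ (B.erase a).sup Subtype.val := by
  intro hle
  rcases (B.erase a).eq_empty_or_nonempty with hempty | hne
  · rw [hempty, Finset.sup_empty, le_bot_iff] at hle
    exact a.2.1 hle
  · exact hB _ (B.erase_subset a) ⟨hne, a, hleast, hle⟩

theorem IsNBB.sup_erase_lt [DecidableEq α] (hB : IsNBB ω B) {a : {a : α // IsAtom a}}
    (ha : a ∈ B) (hleast : ∀ d ∈ B.erase a, ω a d) :
    (B.erase a).sup Subtype.val < B.sup Subtype.val := by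
  refine lt_of_le_of_ne (Finset.sup_mono (B.erase_subset a)) fun h => ?_
  exact hB.not_le_sup_erase_s7 hleast (h ▸ Finset.le_sup ha)

theorem IsNBB.card_le_of_covBy_imp_add_one [Finite α] [IsStrictTotalOrder _ ω]
    {r : α → ℕ} (hr : ∀ a b : α, a ⋖ b → r b = r a + 1) (hB : IsNBB ω B) :
    B.card ≤ r (B.sup Subtype.val) := by
  classical
  induction B using Finset.strongInduction with
  | _ B ih =>
    rcases B.eq_empty_or_nonempty with rfl | hne
    · simp
    obtain ⟨a, ha, hleast⟩ := hne.exists_forall_rel_of_isStrictTotalOrder ω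
    have hrest : (B.erase a).card ≤ r ((B.erase a).sup Subtype.val) :=
      ih _ (B.erase_ssubset ha) (hB.subset (B.erase_subset a))
    have hstep := strictMono_of_covBy_imp_add_one hr (hB.sup_erase_lt ha hleast)
    have hcard := Finset.card_erase_add_one ha
    omega

end NBB

theorem indep_card_le_rank_general (r : L → ℕ) (hr : IsRankFn r)
    (I : Finset {a : L // IsAtom a}) (hI : IndepSet I) :
    I.card ≤ r (I.sup Subtype.val) := by
  obtain ⟨ω, hω, hnbb⟩ := hI
  exact hnbb.card_le_of_covBy_imp_add_one hr.2

/-- In a finite, bounded, atomistic, graded lattice, every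
independent set `I` satisfies `rank(⋁ I) ≥ |I|`. -/
theorem indep_card_le_rank (r : L → ℕ) (hr : IsRankFn r)
    (hatom : AtomisticL L) (I : Finset {a : L // IsAtom a}) (hI : IndepSet I) :
    I.card ≤ r (I.sup Subtype.val) :=
  indep_card_le_rank_general r hr I hI
end

section
/- If I is an independent set in a finite, bounded, atomistic, graded lattice 𝓛 and a is an atom with rank(⋁I) < rank(⋁(I ∪ {a})), then I ∪ {a} is also independent. -/
variable {L : Type*} [Lattice L] [BoundedOrder L] [Fintype L] [DecidableEq L]

/-! Put `a` first: the new order places `a` strictly below every other atom and keeps `ω`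
elsewhere. A bounded-below subset of `I ∪ {a}` for it cannot contain `a`, so it lies in `I`; its
lower bound cannot be `a`, since `a ≰ ⋁ I` (adding `a` raises the rank), so it is an `ω`-lower bound
and the subset was already bounded below in `I`. -/

def placeFirst {α : Type*} (ω : α → α → Prop) (a : α) (x y : α) : Prop :=
  y ≠ a ∧ (x = a ∨ ω x y)

theorem IsStrictTotalOrder.placeFirst {α : Type*} {ω : α → α → Prop}
    (hω : IsStrictTotalOrder α ω) (a : α) : IsStrictTotalOrder α (placeFirst ω a) where
  trichotomous x y hxy hyx := by
    by_contra hne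
    by_cases hx : x = a
    · exact hxy ⟨fun hy => hne (hx.trans hy.symm), .inl hx⟩
    by_cases hy : y = a
    · exact hyx ⟨hx, .inl hy⟩
    exact hne (hω.trichotomous x y (fun h => hxy ⟨hy, .inr h⟩) (fun h => hyx ⟨hx, .inr h⟩))
  irrefl x := by
    rintro ⟨hx, rfl | hxx⟩
    exacts [hx rfl, hω.irrefl x hxx]
  trans x y z := by
    rintro ⟨hy, rfl | hxy⟩ ⟨hz, rfl | hyz⟩
    exacts [⟨hz, .inl rfl⟩, ⟨hz, .inl rfl⟩, absurd rfl hy, ⟨hz, .inr (hω.trans _ _ _ hxy hyz)⟩]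

theorem IsNBB.insert_placeFirst {α : Type*} [Lattice α] [BoundedOrder α] [DecidableEq α]
    {ω : {a : α // IsAtom a} → {a : α // IsAtom a} → Prop} {I : Finset {a : α // IsAtom a}}
    {a : {a : α // IsAtom a}} (hI : IsNBB ω I) (ha : ¬ (a : α) ≤ I.sup Subtype.val) :
    IsNBB (placeFirst ω a) (insert a I) := by
  rintro D hD ⟨hne, b, hbD, hbsup⟩
  have hDI : D ⊆ I := fun d hd =>
    (Finset.mem_insert.mp (hD hd)).resolve_left (hbD d hd).1
  by_cases hba : b = a
  · subst hba
    exact ha (hbsup.trans (Finset.sup_mono hDI))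
  · exact hI D hDI ⟨hne, b, fun d hd => (hbD d hd).2.resolve_left hba, hbsup⟩

theorem indep_insert_general (r : L → ℕ)
    (I : Finset {a : L // IsAtom a}) (hI : IndepSet I) (a : {a : L // IsAtom a})
    (hrank : r (I.sup Subtype.val) < r ((insert a I).sup Subtype.val)) :
    IndepSet (insert a I) := by
  obtain ⟨ω, hω, hnbb⟩ := hI
  have ha : ¬ (a : L) ≤ I.sup Subtype.val := fun h =>
    hrank.ne (by rw [Finset.sup_insert, sup_eq_right.mpr h])
  exact ⟨placeFirst ω a, hω.placeFirst a, hnbb.insert_placeFirst ha⟩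

/-- If `I` is an independent set in a finite, bounded, atomistic,
graded lattice and `a` is an atom with `rank(⋁ I) < rank(⋁(I ∪ {a}))`, then
`I ∪ {a}` is also independent. -/
theorem indep_insert (r : L → ℕ) (hr : IsRankFn r) (hatom : AtomisticL L)
    (I : Finset {a : L // IsAtom a}) (hI : IndepSet I) (a : {a : L // IsAtom a})
    (hrank : r (I.sup Subtype.val) < r ((insert a I).sup Subtype.val)) :
    IndepSet (insert a I) :=
  indep_insert_general r I hI a hrank
end

section
/- If 𝓛 is a geometric lattice, then the family of NBB sets of atoms (over all linear orders on the atoms) equals the family of independent sets of the matroid whose lattice of flats is 𝓛. -/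
variable {L : Type*} [Lattice L] [BoundedOrder L] [Fintype L] [DecidableEq L]

/-!
Independence of atoms is hereditary, since submodularity gives `r (x ⊔ a) ≤ r x + 1`.
If `I` is NBB for a linear order, remove its least atom `a`: the rest `D` is independent by
induction, and if `I` were dependent then adding `a` would not raise the rank of `⋁ D`, so
`a ≤ ⋁ D` and `a` bounds `D` below. Conversely, for an independent `I` take a linear order
in which the atoms of `I` come first: a witness `a` for a BB set `D ⊆ I` then lies in `I \ D`
with `a ≤ ⋁ D`, so `D ∪ {a} ⊆ I` would be dependent.
-/

section Rank

variable {α : Type*} [Lattice α] [BoundedOrder α] {r : α → ℕ}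

def IsSubmodular (r : α → ℕ) : Prop :=
  ∀ x y : α, r (x ⊓ y) + r (x ⊔ y) ≤ r x + r y

theorem IsNBB.mono {ω : {a : α // IsAtom a} → {a : α // IsAtom a} → Prop}
    {B C : Finset {a : α // IsAtom a}} (hB : IsNBB ω B) (hCB : C ⊆ B) : IsNBB ω C :=
  fun D hDC => hB D (hDC.trans hCB)

namespace IsRankFn

theorem strictMono_s11 [Finite α] (hr : IsRankFn r) : StrictMono r := by
  classical
  have := Fintype.ofFinite α
  let := Fintype.toLocallyFiniteOrder (α := α)
  exact (strictMono_iff_forall_covBy r).2 fun a b hab => by rw [hr.2 a b hab]; omega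

theorem rank_atom (hr : IsRankFn r) {a : α} (ha : IsAtom a) : r a = 1 := by
  rw [hr.2 ⊥ a ha.bot_covBy, hr.1]

theorem le_of_rank_sup_le [Finite α] (hr : IsRankFn r) {a x : α} (h : r (a ⊔ x) ≤ r x) :
    a ≤ x :=
  sup_eq_right.1 (le_sup_right.eq_of_not_lt fun hlt => (hr.strictMono_s11 hlt).not_ge h).symm

theorem rank_sup_atom_le (hr : IsRankFn r) (hsub : IsSubmodular r) {a : α} (ha : IsAtom a)
    (x : α) : r (x ⊔ a) ≤ r x + 1 := by
  have := hsub x a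
  rw [hr.rank_atom ha] at this
  omega

theorem rank_sup_finsetSup_le (hr : IsRankFn r) (hsub : IsSubmodular r)
    (s : Finset {a : α // IsAtom a}) (x : α) : r (x ⊔ s.sup Subtype.val) ≤ r x + s.card := by
  classical
  induction s using Finset.induction_on with
  | empty => simp
  | insert a s ha ih =>
    rw [Finset.sup_insert, Finset.card_insert_of_notMem ha, sup_comm (a : α), ← sup_assoc]
    have := hr.rank_sup_atom_le hsub a.2 (x ⊔ s.sup Subtype.val)
    omega

theorem rank_finsetSup_le_card (hr : IsRankFn r) (hsub : IsSubmodular r)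
    (s : Finset {a : α // IsAtom a}) : r (s.sup Subtype.val) ≤ s.card := by
  simpa [hr.1] using hr.rank_sup_finsetSup_le hsub s ⊥

theorem rank_finsetSup_eq_card_of_subset (hr : IsRankFn r) (hsub : IsSubmodular r)
    {I J : Finset {a : α // IsAtom a}} (hJI : J ⊆ I) (hI : r (I.sup Subtype.val) = I.card) :
    r (J.sup Subtype.val) = J.card := by
  classical
  have hsupI : I.sup Subtype.val = J.sup Subtype.val ⊔ (I \ J).sup Subtype.val := by
    rw [← Finset.sup_union, Finset.union_sdiff_of_subset hJI]
  have hle := hr.rank_sup_finsetSup_le hsub (I \ J) (J.sup Subtype.val)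
  rw [← hsupI] at hle
  have := Finset.card_sdiff_add_card_eq_card hJI
  have := hr.rank_finsetSup_le_card hsub J
  omega

theorem rank_eq_card_of_isNBB [Finite α] (hr : IsRankFn r) (hsub : IsSubmodular r)
    (ω : {a : α // IsAtom a} → {a : α // IsAtom a} → Prop) [IsStrictTotalOrder _ ω]
    {I : Finset {a : α // IsAtom a}} (hI : IsNBB ω I) : r (I.sup Subtype.val) = I.card := by
  classical
  -- in this order `a < b` unfolds to `ω a b`; it is not the order inherited from `α`
  let := linearOrderOfSTO ω
  induction I using Finset.induction_on_min with
  | empty => simp [hr.1]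
  | insert a D hmin ih =>
    have hD : r (D.sup Subtype.val) = D.card := ih (hI.mono (Finset.subset_insert a D))
    have haD : a ∉ D := fun h => irrefl_of ω a (hmin a h)
    refine le_antisymm (hr.rank_finsetSup_le_card hsub _) (not_lt.1 fun hlt => ?_)
    rw [Finset.sup_insert, Finset.card_insert_of_notMem haD] at hlt
    have hDne : D.Nonempty := by
      rw [Finset.nonempty_iff_ne_empty]
      rintro rfl
      simp [hr.rank_atom a.2] at hlt
    exact hI D (Finset.subset_insert a D) ⟨hDne, a, hmin, hr.le_of_rank_sup_le (by omega)⟩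

theorem isNBB_of_rank_eq_card (hr : IsRankFn r) (hsub : IsSubmodular r)
    (ω : {a : α // IsAtom a} → {a : α // IsAtom a} → Prop) [Std.Irrefl ω]
    {I : Finset {a : α // IsAtom a}} (hω : ∀ a b, ω a b → b ∈ I → a ∈ I)
    (hI : r (I.sup Subtype.val) = I.card) : IsNBB ω I := by
  classical
  rintro D hDI ⟨⟨d, hd⟩, a, hlt, hle⟩
  have haD : a ∉ D := fun h => irrefl a (hlt a h)
  have hD := hr.rank_finsetSup_eq_card_of_subset hsub hDI hI
  have haDI := hr.rank_finsetSup_eq_card_of_subset hsub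
    (Finset.insert_subset (hω a d (hlt d hd) (hDI hd)) hDI) hI
  rw [Finset.sup_insert, sup_eq_right.2 hle, Finset.card_insert_of_notMem haD] at haDI
  omega

end IsRankFn

end Rank

theorem exists_isStrictTotalOrder_mem_of_rel_of_mem {α : Type*} (s : Set α) :
    ∃ ω : α → α → Prop, IsStrictTotalOrder α ω ∧ ∀ a b, ω a b → b ∈ s → a ∈ s := by
  classical
  let f : α → Bool ×ₗ Cardinal := fun a => toLex (decide (a ∉ s), embeddingToCardinal a)
  let := LinearOrder.lift' f fun a b h => embeddingToCardinal.injective (congrArg (·.2) h)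
  refine ⟨(· < ·), inferInstance, fun a b hab hb => ?_⟩
  have hfst : decide (a ∉ s) ≤ decide (b ∉ s) := Prod.Lex.monotone_fst_ofLex hab.le
  simpa [Bool.le_iff_imp, hb] using hfst

theorem geometric_nbb_eq_indep_general (r : L → ℕ) (hr : IsRankFn r)
    (hsub : ∀ x y : L, r (x ⊓ y) + r (x ⊔ y) ≤ r x + r y)
    (I : Finset {a : L // IsAtom a}) :
    IndepSet I ↔ r (I.sup Subtype.val) = I.card := by
  constructor
  · rintro ⟨ω, hω, hI⟩
    exact hr.rank_eq_card_of_isNBB hsub ω hI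
  · intro hI
    obtain ⟨ω, hω, hωI⟩ :=
      exists_isStrictTotalOrder_mem_of_rel_of_mem (I : Set {a : L // IsAtom a})
    exact ⟨ω, hω, hr.isNBB_of_rank_eq_card hsub ω hωI hI⟩

/-- If `L` is a geometric lattice (finite, atomistic, graded with
submodular rank function), then the NBB sets of atoms (over all linear orders on the
atoms) are exactly the independent sets of the matroid corresponding to `L`, i.e.
the sets of atoms `I` with `rank(⋁ I) = |I|`. -/
theorem geometric_nbb_eq_indep (r : L → ℕ) (hr : IsRankFn r) (hatom : AtomisticL L)
    (hsub : ∀ x y : L, r (x ⊓ y) + r (x ⊔ y) ≤ r x + r y)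
    (I : Finset {a : L // IsAtom a}) :
    IndepSet I ↔ r (I.sup Subtype.val) = I.card :=
  geometric_nbb_eq_indep_general r hr hsub I
end

section
/- If 𝓛 is a C_n lattice and 𝓟 is the induced geometric lattice on the ground set J (identifying elements of 𝓛 with their atom sets, i.e., as subsets of J), then 𝓛 consists exactly of the admissible flats of 𝓟 together with J: 𝓛 = (𝓟 ∩ P^ad(J)) ∪ {J}, where P^ad(J) is the set of admissible subsets of J. -/
open Finset

variable {α : Type*} [DecidableEq α] [Fintype α]

/-- The atoms of `L` meeting the set `X` (written `A(X)` in the paper). -/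
def atomsMeeting (L : Set (Finset α)) (X : Finset α) : Set (Finset α) :=
  {A | IsAtomIn L A ∧ (A ∩ X).Nonempty}

/-- `X` is disjoint in `L`: its elements lie in distinct atoms of `L`,
i.e. `|A(X)| = |X|`. -/
def DisjointIn (L : Set (Finset α)) (X : Finset α) : Prop :=
  (atomsMeeting L X).ncard = X.card

/-- The join of `S` in the family `L`: the smallest member of `L` containing `S`. -/
def joinIn (L : Set (Finset α)) (S : Finset α) : Set α :=
  {x | ∀ X ∈ L, S ⊆ X → x ∈ X}

/-- A nonempty, disjoint-in-`L` set `D ⊆ J` is bounded below w.r.t. the strict order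
`ω` on the ground set if some `a` is a strict `ω`-lower bound of `D` with `a ∈ ⋁D`. -/
def GBB (L : Set (Finset α)) (ω : α → α → Prop) (D : Finset α) : Prop :=
  D.Nonempty ∧ DisjointIn L D ∧ ∃ a : α, (∀ d ∈ D, ω a d) ∧ a ∈ joinIn L D

/-- `B` is NBB w.r.t. `ω` if it contains no bounded below subset. -/
def GNBB (L : Set (Finset α)) (ω : α → α → Prop) (B : Finset α) : Prop :=
  ∀ D ⊆ B, ¬ GBB L ω D

/-- A subset of the ground set is independent in `L` if it is NBB for some
linear (strict total) order on the ground set. -/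
def IndepIn (L : Set (Finset α)) (B : Finset α) : Prop :=
  ∃ ω : α → α → Prop, IsStrictTotalOrder α ω ∧ GNBB L ω B

/-- A set is admissible if it is disjoint from its star. -/
def Admissible (star : α → α) (A : Finset α) : Prop := A ∩ A.image star = ∅

/-- The rank function of the matroid with independent-set family `𝓘`. -/
noncomputable def matRank (𝓘 : Set (Finset α)) (A : Finset α) : ℕ :=
  sSup {k | ∃ I ∈ 𝓘, I ⊆ A ∧ I.card = k}

/-- `F` is a flat of the matroid on ground set `E` with independent sets `𝓘`. -/
def IsFlatOf (𝓘 : Set (Finset α)) (E : Finset α) (F : Finset α) : Prop :=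
  F ⊆ E ∧ ∀ x ∈ E, x ∉ F → matRank 𝓘 F < matRank 𝓘 (insert x F)


/-!
Write `cl` for the join `spanIn E L` and `S + a` for `insert a S`. Strictly below the top `E`,
`cl` behaves like a matroid closure: for `W ∈ L` and `a ∉ W`, `cl (W + a)` covers `W` unless it
is `E`, and it is `E` only if `a* ∈ W` or `W` is a coatom. Adding `x ∉ cl B` to an NBB set `B`
keeps it NBB (put `x` first in the order), and the least element of an NBB set avoids the join
of the others; together these give the exchange property for independent sets whose join is
not `E`. Hence members of `L` are flats, and a flat `F` with `cl F ≠ E` equals `cl F ∈ L`. If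
an admissible flat `F ≠ E` had `cl F = E`, then for `s ∈ F` a basis of `F` together with `s*`
would span `E`, and exchanging `s*` for `s` would give an independent subset of `F` larger than
the rank of `F`.
-/

section General

variable {α : Type*} {star : α → α} {E F I S T W X : Finset α} {L : Set (Finset α)}
  {a x : α}

open Classical in
noncomputable def spanIn (E : Finset α) (L : Set (Finset α)) (S : Finset α) : Finset α :=
  E.filter (· ∈ joinIn L S)

theorem mem_spanIn : x ∈ spanIn E L S ↔ x ∈ E ∧ x ∈ joinIn L S := by
  simp [spanIn]

theorem spanIn_subset_ground : spanIn E L S ⊆ E := fun _ hx => (mem_spanIn.1 hx).1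

theorem subset_spanIn (hS : S ⊆ E) : S ⊆ spanIn E L S :=
  fun _ hx => mem_spanIn.2 ⟨hS hx, fun _ _ hSX => hSX hx⟩

theorem ne_ground_of_subset_spanIn (hX : X ⊆ spanIn E L T) (hT : spanIn E L T ≠ E) :
    X ≠ E :=
  (hX.trans_ssubset (spanIn_subset_ground.ssubset_of_ne hT)).ne

theorem CovIn.eq_of_mem {W V Y : Finset α} (hWV : CovIn L W V) (hY : Y ∈ L) (hWY : W ⊆ Y)
    (hYV : Y ⊆ V) (hx : x ∈ Y) (hxW : x ∉ W) : Y = V :=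
  (hWV.2.2.2 Y hY hWY hYV).resolve_left fun hYW => hxW (hYW ▸ hx)

theorem bddAbove_matRank_set (𝓘 : Set (Finset α)) (F : Finset α) :
    BddAbove {k | ∃ I ∈ 𝓘, I ⊆ F ∧ I.card = k} :=
  bddAbove_def.2 ⟨F.card, by rintro _ ⟨I, -, hIF, rfl⟩; exact card_le_card hIF⟩

theorem card_le_matRank {𝓘 : Set (Finset α)} (hI : I ∈ 𝓘) (hIF : I ⊆ F) :
    I.card ≤ matRank 𝓘 F :=
  le_csSup (bddAbove_matRank_set 𝓘 F) ⟨I, hI, hIF, rfl⟩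

theorem exists_card_eq_matRank {𝓘 : Set (Finset α)} (h𝓘 : ∅ ∈ 𝓘) (F : Finset α) :
    ∃ I ∈ 𝓘, I ⊆ F ∧ I.card = matRank 𝓘 F :=
  Nat.sSup_mem (s := {k | ∃ I ∈ 𝓘, I ⊆ F ∧ I.card = k})
    ⟨0, ∅, h𝓘, empty_subset F, rfl⟩ (bddAbove_matRank_set 𝓘 F)

def withBotAt (ω : α → α → Prop) (x : α) : α → α → Prop :=
  fun a b => b ≠ x ∧ (a = x ∨ ω a b)

instance (ω : α → α → Prop) [IsStrictTotalOrder α ω] (x : α) :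
    IsStrictTotalOrder α (withBotAt ω x) where
  irrefl a h := by rcases h with ⟨ha, rfl | h⟩ <;> [exact ha rfl; exact irrefl a h]
  trans _ _ _ hab hbc :=
    ⟨hbc.1, hab.2.imp_right fun h => _root_.trans h (hbc.2.resolve_left hab.1)⟩
  trichotomous a b hab hba := by
    by_contra hne
    by_cases ha : a = x
    · exact hab ⟨fun hb => hne (ha.trans hb.symm), Or.inl ha⟩
    by_cases hb : b = x
    · exact hba ⟨ha, Or.inl hb⟩
    rcases trichotomous_of ω a b with h | h | h
    exacts [hab ⟨hb, Or.inr h⟩, hne h, hba ⟨ha, Or.inr h⟩]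

variable [DecidableEq α]

theorem Admissible.star_notMem (hF : Admissible star F) {s : α} (hs : s ∈ F) :
    star s ∉ F := fun hss => by
  simpa [show F ∩ F.image star = ∅ from hF] using
    mem_inter.2 ⟨hss, mem_image_of_mem star hs⟩

theorem indepIn_empty : IndepIn L ∅ :=
  ⟨WellOrderingRel, inferInstance, fun _ hD hbb => by
    simpa [subset_empty.1 hD] using hbb.1⟩

theorem IndepIn.subset (hT : IndepIn L T) (hST : S ⊆ T) : IndepIn L S :=
  let ⟨ω, hω, hnbb⟩ := hT
  ⟨ω, hω, fun D hD => hnbb D (hD.trans hST)⟩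

theorem IndepIn.insert_of_notMem_spanIn (hT : IndepIn L T) (hx : x ∈ E)
    (hxT : x ∉ spanIn E L T) : IndepIn L (insert x T) := by
  obtain ⟨ω, hω, hnbb⟩ := hT
  refine ⟨withBotAt ω x, inferInstance, ?_⟩
  rintro D hD ⟨hDne, hDdisj, a, hlow, haD⟩
  have hxD : x ∉ D := fun hxD => (hlow x hxD).1 rfl
  have hDT : D ⊆ T := (subset_insert_iff_of_notMem hxD).1 hD
  have hax : a ≠ x := by
    rintro rfl
    exact hxT (mem_spanIn.2 ⟨hx, fun X hX hTX => haD X hX (hDT.trans hTX)⟩)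
  exact hnbb D hDT ⟨hDne, hDdisj, a, fun d hd => (hlow d hd).2.resolve_left hax, haD⟩

theorem IndepIn.subset_spanIn_of_matRank_le (hI : IndepIn L I) (hIF : I ⊆ F) (hFE : F ⊆ E)
    (hrank : matRank {S | IndepIn L S} F ≤ I.card) : F ⊆ spanIn E L I := by
  intro f hf
  by_contra hfI
  have hfI' : f ∉ I := fun hfI' => hfI (subset_spanIn (hIF.trans hFE) hfI')
  have hle := card_le_matRank (𝓘 := {S | IndepIn L S})
    (hI.insert_of_notMem_spanIn (hFE hf) hfI) (insert_subset hf hIF)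
  rw [card_insert_of_notMem hfI'] at hle
  omega

theorem IsCnLattice.eq_ground_of_star_mem (h : IsCnLattice star E L) (hX : X ∈ L)
    (hx : x ∈ X) (hsx : star x ∈ X) : X = E := by
  by_contra hXE
  exact Admissible.star_notMem (h.admissible X hX hXE) hx hsx

theorem IsCnLattice.mem_image_star_iff (h : IsCnLattice star E L) :
    a ∈ W.image star ↔ star a ∈ W :=
  mem_image.trans
    ⟨by rintro ⟨w, hw, rfl⟩; rwa [h.star_invol], fun ha => ⟨star a, ha, h.star_invol a⟩⟩

theorem IsFlatOf.exists_indepIn_erase_spanning (hF : IsFlatOf {S | IndepIn L S} E F)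
    (hx : x ∈ E) (hxF : x ∉ F) :
    ∃ J, IndepIn L J ∧ J ⊆ insert x F ∧ x ∈ J ∧ matRank {S | IndepIn L S} F < J.card ∧
      F ⊆ spanIn E L (J.erase x) := by
  obtain ⟨J, hJ, hJF, hcard⟩ :=
    exists_card_eq_matRank (𝓘 := {S | IndepIn L S}) indepIn_empty (insert x F)
  have hlt : matRank {S | IndepIn L S} F < J.card := hcard ▸ hF.2 x hx hxF
  have hxJ : x ∈ J := by
    by_contra hxJ
    exact hlt.not_ge (card_le_matRank hJ ((subset_insert_iff_of_notMem hxJ).1 hJF))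
  refine ⟨J, hJ, hJF, hxJ, hlt, ?_⟩
  refine (hJ.subset (erase_subset x J)).subset_spanIn_of_matRank_le (subset_insert_iff.1 hJF)
    hF.1 ?_
  rw [card_erase_of_mem hxJ]
  omega

end General

namespace IsCnLattice

variable {star : α → α} {E S T W X A D : Finset α} {L : Set (Finset α)} {a s x : α}

theorem isLeast_spanIn (h : IsCnLattice star E L) (hS : S ⊆ E) :
    IsLeast {X | X ∈ L ∧ S ⊆ X} (spanIn E L S) := by
  obtain ⟨M, ⟨hM, hSM⟩, hmin⟩ :=
    (Set.toFinite {X | X ∈ L ∧ S ⊆ X}).exists_minimal ⟨E, h.ground_mem, hS⟩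
  have hleast : ∀ X ∈ L, S ⊆ X → M ⊆ X := fun X hX hSX =>
    (hmin ⟨h.inter_mem M hM X hX, subset_inter hSM hSX⟩ inter_subset_left).trans
      inter_subset_right
  have hspan : spanIn E L S = M := by
    ext y
    exact ⟨fun hy => (mem_spanIn.1 hy).2 M hM hSM, fun hy => mem_spanIn.2
      ⟨h.subset_ground M hM hy, fun X hX hSX => hleast X hX hSX hy⟩⟩
  exact hspan ▸ ⟨⟨hM, hSM⟩, fun X hX => hleast X hX.1 hX.2⟩

theorem spanIn_mem (h : IsCnLattice star E L) (hS : S ⊆ E) : spanIn E L S ∈ L :=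
  (h.isLeast_spanIn hS).1.1

theorem spanIn_subset (h : IsCnLattice star E L) (hS : S ⊆ E) (hX : X ∈ L) (hSX : S ⊆ X) :
    spanIn E L S ⊆ X :=
  (h.isLeast_spanIn hS).2 ⟨hX, hSX⟩

theorem spanIn_mono (h : IsCnLattice star E L) (hT : T ⊆ E) (hST : S ⊆ T) :
    spanIn E L S ⊆ spanIn E L T :=
  h.spanIn_subset (hST.trans hT) (h.spanIn_mem hT) (hST.trans (subset_spanIn hT))

theorem spanIn_eq_self (h : IsCnLattice star E L) (hX : X ∈ L) : spanIn E L X = X :=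
  (h.spanIn_subset (h.subset_ground X hX) hX subset_rfl).antisymm
    (subset_spanIn (h.subset_ground X hX))

theorem spanIn_empty (h : IsCnLattice star E L) : spanIn E L ∅ = ∅ :=
  h.spanIn_eq_self h.empty_mem

theorem spanIn_insert_spanIn (h : IsCnLattice star E L) (hT : T ⊆ E) (hx : x ∈ E) :
    spanIn E L (insert x (spanIn E L T)) = spanIn E L (insert x T) := by
  have hxT : insert x T ⊆ E := insert_subset hx hT
  refine (h.spanIn_subset (insert_subset hx spanIn_subset_ground) (h.spanIn_mem hxT)
    (insert_subset (subset_spanIn hxT (mem_insert_self x T)) ?_)).antisymm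
    (h.spanIn_mono (insert_subset hx spanIn_subset_ground) (insert_subset_insert x
      (subset_spanIn hT)))
  exact h.spanIn_mono hxT (subset_insert x T)

theorem covIn_spanIn_insert (h : IsCnLattice star E L) (hW : W ∈ L) (hWE : ¬ CovIn L W E)
    (ha : a ∈ E) (haW : a ∉ W) (hsa : star a ∉ W) : CovIn L W (spanIn E L (insert a W)) := by
  have haW' : insert a W ⊆ E := insert_subset ha (h.subset_ground W hW)
  obtain ⟨B, hB, haB⟩ :=
    (h.covers_union W hW hWE a).1 (mem_sdiff.2 ⟨ha, h.mem_image_star_iff.not.2 hsa⟩)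
  have hspan := hB.eq_of_mem (h.spanIn_mem haW')
    ((subset_insert a W).trans (subset_spanIn haW'))
    (h.spanIn_subset haW' hB.2.1 (insert_subset haB hB.2.2.1.1))
    (subset_spanIn haW' (mem_insert_self a W)) haW
  exact hspan ▸ hB

theorem covIn_spanIn_insert_of_ne (h : IsCnLattice star E L) (hW : W ∈ L) (ha : a ∈ E)
    (haW : a ∉ W) (hne : spanIn E L (insert a W) ≠ E) :
    CovIn L W (spanIn E L (insert a W)) := by
  have haW' : insert a W ⊆ E := insert_subset ha (h.subset_ground W hW)
  have haspan : a ∈ spanIn E L (insert a W) := subset_spanIn haW' (mem_insert_self a W)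
  have hWspan : W ⊆ spanIn E L (insert a W) := (subset_insert a W).trans (subset_spanIn haW')
  by_cases hWE : CovIn L W E
  · exact absurd (hWE.eq_of_mem (h.spanIn_mem haW') hWspan spanIn_subset_ground haspan haW) hne
  by_cases hsa : star a ∈ W
  · exact absurd (h.eq_ground_of_star_mem (h.spanIn_mem haW') haspan (hWspan hsa)) hne
  exact h.covIn_spanIn_insert hW hWE ha haW hsa

theorem star_mem_of_spanIn_insert_eq_ground (h : IsCnLattice star E L) (hW : W ∈ L)
    (hWE : ¬ CovIn L W E) (ha : a ∈ E) (haW : a ∉ W) (hspan : spanIn E L (insert a W) = E) :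
    star a ∈ W := by
  by_contra hsa
  exact hWE (hspan ▸ h.covIn_spanIn_insert hW hWE ha haW hsa)

theorem notMem_spanIn_insert_of_star_mem (h : IsCnLattice star E L) (hW : W ∈ L)
    (hWE : ¬ CovIn L W E) (hs : s ∈ E) (hsW : s ∉ W) (hssW : star s ∉ W)
    (ha : star a ∈ W) : a ∉ spanIn E L (insert s W) := fun haW => by
  have hcov := h.covIn_spanIn_insert hW hWE hs hsW hssW
  exact hWE (h.eq_ground_of_star_mem hcov.2.1 haW (hcov.2.2.1.1 ha) ▸ hcov)

theorem eq_spanIn_singleton (h : IsCnLattice star E L) (hA : IsAtomIn L A)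
    (hx : x ∈ A) : A = spanIn E L {x} := by
  have hxE : {x} ⊆ E := singleton_subset_iff.2 (h.subset_ground A hA.2.1 hx)
  exact (hA.eq_of_mem (h.spanIn_mem hxE) (empty_subset _)
    (h.spanIn_subset hxE hA.2.1 (singleton_subset_iff.2 hx))
    (subset_spanIn hxE (mem_singleton_self x)) (notMem_empty x)).symm

theorem isAtomIn_spanIn_singleton (h : IsCnLattice star E L) (hx : x ∈ E) :
    IsAtomIn L (spanIn E L {x}) := by
  obtain ⟨A, hA, hxA⟩ : ∃ A, IsAtomIn L A ∧ x ∈ A := by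
    by_cases hcov : CovIn L ∅ E
    · exact ⟨E, hcov, hx⟩
    · exact (h.covers_union ∅ h.empty_mem hcov x).1 (by simpa using hx)
  exact h.eq_spanIn_singleton hA hxA ▸ hA

theorem atomsMeeting_eq_image (h : IsCnLattice star E L) (hD : D ⊆ E) :
    atomsMeeting L D = ↑(D.image fun d => spanIn E L {d}) := by
  ext A
  simp only [atomsMeeting, Set.mem_ofPred_eq, coe_image, Set.mem_image, mem_coe]
  constructor
  · rintro ⟨hA, y, hy⟩
    exact ⟨y, (mem_inter.1 hy).2, (h.eq_spanIn_singleton hA (mem_inter.1 hy).1).symm⟩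
  · rintro ⟨d, hd, rfl⟩
    exact ⟨h.isAtomIn_spanIn_singleton (hD hd), d,
      mem_inter.2 ⟨subset_spanIn (singleton_subset_iff.2 (hD hd)) (mem_singleton_self d), hd⟩⟩

theorem disjointIn_iff_injOn (h : IsCnLattice star E L) (hD : D ⊆ E) :
    DisjointIn L D ↔ Set.InjOn (fun d => spanIn E L {d}) D := by
  rw [DisjointIn, h.atomsMeeting_eq_image hD, Set.ncard_coe_finset, card_image_iff]

end IsCnLattice

namespace IndepIn

variable {star : α → α} {E B : Finset α} {L : Set (Finset α)} {s x : α}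

theorem injOn_spanIn_singleton (h : IsCnLattice star E L) (hB : IndepIn L B) (hBE : B ⊆ E) :
    Set.InjOn (fun d => spanIn E L {d}) B := by
  obtain ⟨ω, hω, hnbb⟩ := hB
  have hne : ∀ d ∈ B, ∀ d' ∈ B, ω d d' → spanIn E L {d} ≠ spanIn E L {d'} := by
    intro d hd d' hd' hdd' heq
    have hd'E : {d'} ⊆ E := singleton_subset_iff.2 (hBE hd')
    have hdd'span : d ∈ spanIn E L {d'} :=
      heq ▸ subset_spanIn (singleton_subset_iff.2 (hBE hd)) (mem_singleton_self d)
    refine hnbb {d'} (singleton_subset_iff.2 hd') ⟨singleton_nonempty d', ?_, d, ?_,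
      (mem_spanIn.1 hdd'span).2⟩
    · exact (h.disjointIn_iff_injOn hd'E).2 (by simp)
    · simpa using hdd'
  intro d hd d' hd' heq
  rcases trichotomous_of ω d d' with hlt | hdd' | hgt
  exacts [absurd heq (hne d hd d' hd' hlt), hdd', absurd heq.symm (hne d' hd' d hd hgt)]

/-- The `ω`-least element of an NBB set avoids the join of the others: otherwise the others,
which lie in distinct atoms, would be bounded below by it. -/
theorem exists_notMem_spanIn_erase (h : IsCnLattice star E L) (hB : IndepIn L B)
    (hBE : B ⊆ E) (hne : B.Nonempty) : ∃ a ∈ B, a ∉ spanIn E L (B.erase a) := by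
  have hinj := hB.injOn_spanIn_singleton h hBE
  obtain ⟨ω, hω, hnbb⟩ := hB
  obtain ⟨a, haB, hmin⟩ := (Finite.wellFounded_of_trans_of_irrefl ω).has_min (B : Set α) hne
  refine ⟨a, haB, fun ha => hnbb (B.erase a) (erase_subset a B) ⟨?_, ?_, a, fun d hd => ?_,
    (mem_spanIn.1 ha).2⟩⟩
  · refine (B.erase a).eq_empty_or_nonempty.resolve_left fun hemp => ?_
    rw [hemp, h.spanIn_empty] at ha
    exact notMem_empty a ha
  · exact (h.disjointIn_iff_injOn ((erase_subset a B).trans hBE)).2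
      (hinj.mono (coe_subset.2 (erase_subset a B)))
  · obtain ⟨hda, hdB⟩ := mem_erase.1 hd
    exact ((trichotomous_of ω a d).resolve_right (Or.rec hda.symm (hmin d hdB)))

/-- Exchange below `E`, by induction on `B`: let `a ∉ cl T` with `T = B - a`, and
`W = cl (T - x)`. If `x ∈ cl (B - x) = cl (W + a)`, then the cover `cl (W + a)` of `W` equals
`cl (W + x) = cl T`, which misses `a`. -/
theorem notMem_spanIn_erase (h : IsCnLattice star E L) (hB : IndepIn L B) (hBE : B ⊆ E)
    (hspan : spanIn E L B ≠ E) (hx : x ∈ B) : x ∉ spanIn E L (B.erase x) := by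
  induction B using Finset.strongInduction generalizing x with
  | H B ih =>
  obtain ⟨a, haB, ha⟩ := hB.exists_notMem_spanIn_erase h hBE ⟨x, hx⟩
  rcases eq_or_ne x a with rfl | hxa
  · exact ha
  set T := B.erase a
  have hTE : T ⊆ E := (erase_subset a B).trans hBE
  have hxT : x ∈ T := mem_erase.2 ⟨hxa, hx⟩
  have hTx : T.erase x ⊆ E := (erase_subset x T).trans hTE
  have hxW : x ∉ spanIn E L (T.erase x) := ih T (erase_ssubset haB)
    (hB.subset (erase_subset a B)) hTE
    (ne_ground_of_subset_spanIn (h.spanIn_mono hBE (erase_subset a B)) hspan) hxT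
  set W := spanIn E L (T.erase x)
  have haW : a ∉ W := fun haW => ha (h.spanIn_mono hTE (erase_subset x T) haW)
  have haW' : insert a W ⊆ E := insert_subset (hBE haB) spanIn_subset_ground
  have hxW' : insert x W ⊆ E := insert_subset (hBE hx) spanIn_subset_ground
  have hBx : spanIn E L (insert a W) = spanIn E L (B.erase x) := by
    rw [h.spanIn_insert_spanIn hTx (hBE haB), erase_right_comm,
      insert_erase (mem_erase.2 ⟨hxa.symm, haB⟩)]
  intro hxBx
  have hcov : CovIn L W (spanIn E L (insert a W)) :=
    h.covIn_spanIn_insert_of_ne (h.spanIn_mem hTx) (hBE haB) haW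
      (hBx ▸ ne_ground_of_subset_spanIn (h.spanIn_mono hBE (erase_subset x B)) hspan)
  have hxspan : spanIn E L (insert x W) = spanIn E L (insert a W) :=
    hcov.eq_of_mem (h.spanIn_mem hxW') ((subset_insert x W).trans (subset_spanIn hxW'))
      (h.spanIn_subset hxW' hcov.2.1 (insert_subset (hBx ▸ hxBx) hcov.2.2.1.1))
      (subset_spanIn hxW' (mem_insert_self x W)) hxW
  rw [h.spanIn_insert_spanIn hTx (hBE hx), insert_erase hxT] at hxspan
  exact ha (hxspan ▸ subset_spanIn haW' (mem_insert_self a W))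

/-- Write `B = T + a` with `a ∉ cl T` and put `W = cl (T - s*) ⊊ cl T ≠ E`. As `W + a` spans
`E` while `W` is no coatom, `a* ∈ W`; hence `W + s` is a cover of `W` not containing `a`, and
`(T - s*) + s + a = (B - s*) + s` is independent. -/
theorem exists_swap_star (h : IsCnLattice star E L) (hB : IndepIn L B) (hBE : B ⊆ E)
    (hsB : star s ∈ B) (hspan : spanIn E L (B.erase (star s)) = E) :
    s ∉ B ∧ IndepIn L (insert s (B.erase (star s))) := by
  obtain ⟨a, haB, ha⟩ := hB.exists_notMem_spanIn_erase h hBE ⟨_, hsB⟩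
  have hsE : s ∈ E := h.star_invol s ▸ h.star_mem _ (hBE hsB)
  set T := B.erase a
  have hTE : T ⊆ E := (erase_subset a B).trans hBE
  have hTne : spanIn E L T ≠ E := fun hTeq => ha (by rw [hTeq]; exact hBE haB)
  have has : a ≠ star s := by
    rintro rfl
    exact hTne hspan
  have hsT : star s ∈ T := mem_erase.2 ⟨has.symm, hsB⟩
  set U := T.erase (star s)
  have hUE : U ⊆ E := (erase_subset _ T).trans hTE
  set W := spanIn E L U
  have hsW : star s ∉ W := (hB.subset (erase_subset a B)).notMem_spanIn_erase h hTE hTne hsT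
  have hWT : W ⊆ spanIn E L T := h.spanIn_mono hTE (erase_subset _ T)
  have hWcoatom : ¬ CovIn L W E := fun hcov => hTne
    (hcov.eq_of_mem (h.spanIn_mem hTE) hWT spanIn_subset_ground (subset_spanIn hTE hsT) hsW)
  have hBs : B.erase (star s) = insert a U := by
    rw [show U = (B.erase (star s)).erase a from erase_right_comm,
      insert_erase (mem_erase.2 ⟨has, haB⟩)]
  have hsa : star a ∈ W :=
    h.star_mem_of_spanIn_insert_eq_ground (h.spanIn_mem hUE) hWcoatom (hBE haB)
      (fun haW => ha (hWT haW)) (by rw [h.spanIn_insert_spanIn hUE (hBE haB), ← hBs, hspan])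
  have hsnT : s ∉ spanIn E L T := fun hsT' =>
    hTne (h.eq_ground_of_star_mem (h.spanIn_mem hTE) hsT' (subset_spanIn hTE hsT))
  have hsnB : s ∉ B := by
    intro hsB'
    rcases eq_or_ne s a with rfl | hsa'
    · exact hsW hsa
    · exact hsnT (subset_spanIn hTE (mem_erase.2 ⟨hsa', hsB'⟩))
  have hsnW : s ∉ W := fun hsW' => hsnT (hWT hsW')
  refine ⟨hsnB, ?_⟩
  rw [hBs, insert_comm]
  refine ((hB.subset ((erase_subset _ T).trans (erase_subset a B))).insert_of_notMem_spanIn hsE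
    hsnW).insert_of_notMem_spanIn (hBE haB) ?_
  rw [← h.spanIn_insert_spanIn hUE hsE]
  exact h.notMem_spanIn_insert_of_star_mem (h.spanIn_mem hUE) hWcoatom hsE hsnW hsW hsa

end IndepIn

theorem IsCnLattice.isFlatOf_of_mem {star : α → α} {E A : Finset α} {L : Set (Finset α)}
    (h : IsCnLattice star E L) (hA : A ∈ L) : IsFlatOf {S | IndepIn L S} E A := by
  have hAE : A ⊆ E := h.subset_ground A hA
  refine ⟨hAE, fun x hx hxA => ?_⟩
  obtain ⟨I, hI, hIA, hcard⟩ :=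
    exists_card_eq_matRank (𝓘 := {S | IndepIn L S}) indepIn_empty A
  have hxI : x ∉ spanIn E L I := fun hxI => hxA (h.spanIn_subset (hIA.trans hAE) hA hIA hxI)
  calc matRank {S | IndepIn L S} A = I.card := hcard.symm
    _ < (insert x I).card := card_lt_card (ssubset_insert fun hxI' => hxA (hIA hxI'))
    _ ≤ matRank {S | IndepIn L S} (insert x A) :=
      card_le_matRank (IndepIn.insert_of_notMem_spanIn hI hx hxI) (insert_subset_insert x hIA)

namespace IsFlatOf

variable {star : α → α} {E F : Finset α} {L : Set (Finset α)}

theorem spanIn_eq_self (h : IsCnLattice star E L) (hF : IsFlatOf {S | IndepIn L S} E F)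
    (hspan : spanIn E L F ≠ E) : spanIn E L F = F := by
  refine subset_antisymm (fun x hxspan => ?_) (subset_spanIn hF.1)
  by_contra hxF
  have hxE : x ∈ E := spanIn_subset_ground hxspan
  obtain ⟨J, hJ, hJF, hxJ, -, hFJ⟩ := hF.exists_indepIn_erase_spanning hxE hxF
  have hJE : J ⊆ E := hJF.trans (insert_subset hxE hF.1)
  have hJspan : spanIn E L J ⊆ spanIn E L F :=
    h.spanIn_subset hJE (h.spanIn_mem hF.1)
      (hJF.trans (insert_subset hxspan (subset_spanIn hF.1)))
  refine hJ.notMem_spanIn_erase h hJE (ne_ground_of_subset_spanIn hJspan hspan) hxJ ?_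
  exact h.spanIn_subset hF.1 (h.spanIn_mem ((erase_subset x J).trans hJE)) hFJ hxspan

/-- If `F ≠ E` with `cl F = E`, take `s ∈ F`; a basis of `F` plus `s*` spans `E`, and
swapping `s*` for `s` gives an independent subset of `F` exceeding its rank. -/
theorem eq_ground_of_spanIn_eq (h : IsCnLattice star E L)
    (hF : IsFlatOf {S | IndepIn L S} E F) (hadm : Admissible star F)
    (hspan : spanIn E L F = E) : F = E := by
  by_contra hFE
  obtain ⟨s, hs⟩ : F.Nonempty := by
    rw [nonempty_iff_ne_empty]
    rintro rfl
    exact hFE (by rwa [h.spanIn_empty] at hspan)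
  obtain ⟨J, hJ, hJF, hsJ, hlt, hFJ⟩ :=
    hF.exists_indepIn_erase_spanning (h.star_mem s (hF.1 hs)) (hadm.star_notMem hs)
  have hJE : J ⊆ E := hJF.trans (insert_subset (h.star_mem s (hF.1 hs)) hF.1)
  have hKE : J.erase (star s) ⊆ E := (erase_subset _ J).trans hJE
  have hKspan : spanIn E L (J.erase (star s)) = E := spanIn_subset_ground.antisymm
    (hspan.symm.trans_subset (h.spanIn_subset hF.1 (h.spanIn_mem hKE) hFJ))
  obtain ⟨hsnJ, hind⟩ := hJ.exists_swap_star h hJE hsJ hKspan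
  have hle := card_le_matRank (𝓘 := {S | IndepIn L S}) hind
    (insert_subset hs (subset_insert_iff.1 hJF))
  rw [card_insert_of_notMem fun hs' => hsnJ (mem_of_mem_erase hs'), card_erase_of_mem hsJ]
    at hle
  omega

end IsFlatOf

/-- If `L` is a `C_n` lattice and `P` is the induced geometric
lattice on the ground set `J` (the lattice of flats of the matroid whose independent
sets are the NBB sets of `L`), then `L` consists exactly of the admissible flats of
`P` together with `J` itself: `L = (P ∩ P^ad(J)) ∪ {J}`. -/
theorem cn_eq_admissible_flats (star : α → α) (E : Finset α) (L : Set (Finset α))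
    (h : IsCnLattice star E L) :
    L = {F | IsFlatOf {S | IndepIn L S} E F ∧ Admissible star F} ∪ {E} := by
  ext A
  simp only [Set.mem_union, Set.mem_ofPred_eq, Set.mem_singleton_iff]
  constructor
  · intro hA
    by_cases hAE : A = E
    · exact Or.inr hAE
    · exact Or.inl ⟨h.isFlatOf_of_mem hA, h.admissible A hA hAE⟩
  · rintro (⟨hF, hadm⟩ | rfl)
    · by_cases hspan : spanIn E L A = E
      · exact hF.eq_ground_of_spanIn_eq h hadm hspan ▸ h.ground_mem
      · exact hF.spanIn_eq_self h hspan ▸ h.spanIn_mem hF.1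
    · exact h.ground_mem
end

section
/- For any admissible subset A of J and any C_n lattice 𝓛, the independent sets of 𝓛 contained in A coincide with the independent sets of the restricted lattice 𝓛 ∩ A = {X ∩ A : X ∈ 𝓛} with linear orders restricted to A: I(𝓛,P) ∩ P(A) = I(𝓛 ∩ A, P|_A). -/
open Finset

variable {α : Type*} [DecidableEq α] [Fintype α]

/-!
The atoms of the restricted family `L ∩ A` (`traceOn L A`) are exactly the traces `B ∩ A` of the atoms `B` of `L` meeting `A`, and
distinct atoms of an intersection-closed family are disjoint, so a set `D ⊆ A` is disjoint in
`L ∩ A` iff it is disjoint in `L`; on `A`, joins in `L ∩ A` are joins in `L` cut down to `A`.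
Hence a bounded-below set for `L ∩ A` is bounded below for `L` under the same order. Conversely,
if the order is modified so that all of `A` precedes everything outside `A`, a lower bound of a
set `D ⊆ A` must lie in `A`, so a bounded-below set for `L` is bounded below for `L ∩ A`.
-/

section Restriction

omit [Fintype α]

variable {L : Set (Finset α)} {A B D : Finset α}

def traceOn (L : Set (Finset α)) (A : Finset α) : Set (Finset α) :=
  {X | ∃ Y ∈ L, X = Y ∩ A}

lemma IsAtomIn.subset_of_inter_nonempty (hL : ∀ X ∈ L, ∀ Y ∈ L, X ∩ Y ∈ L)
    (hB : IsAtomIn L B) {Y : Finset α} (hY : Y ∈ L) (hBY : (B ∩ Y).Nonempty) : B ⊆ Y := by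
  rcases hB.2.2.2 (B ∩ Y) (hL B hB.2.1 Y hY) (empty_subset _) inter_subset_left with h | h
  · exact absurd h hBY.ne_empty
  · exact inter_eq_left.mp h

lemma IsAtomIn.eq_of_inter_nonempty (hL : ∀ X ∈ L, ∀ Y ∈ L, X ∩ Y ∈ L)
    {B' : Finset α} (hB : IsAtomIn L B) (hB' : IsAtomIn L B') (hBB' : (B ∩ B').Nonempty) :
    B = B' :=
  Subset.antisymm (hB.subset_of_inter_nonempty hL hB'.2.1 hBB')
    (hB'.subset_of_inter_nonempty hL hB.2.1 (by rwa [inter_comm]))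

lemma IsCnLattice.exists_atom_mem {star : α → α} {E : Finset α} (h : IsCnLattice star E L)
    {x : α} (hx : x ∈ E) : ∃ B, IsAtomIn L B ∧ x ∈ B := by
  by_cases hE : CovIn L ∅ E
  · exact ⟨E, hE, hx⟩
  · exact (h.covers_union ∅ h.empty_mem hE x).mp (by simpa using hx)

lemma IsAtomIn.inter_isAtomIn_traceOn (hempty : ∅ ∈ L) (hL : ∀ X ∈ L, ∀ Y ∈ L, X ∩ Y ∈ L)
    (hB : IsAtomIn L B) (hBA : (B ∩ A).Nonempty) : IsAtomIn (traceOn L A) (B ∩ A) := by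
  refine ⟨⟨∅, hempty, by simp⟩, ⟨B, hB.2.1, rfl⟩, empty_ssubset.mpr hBA, ?_⟩
  rintro _ ⟨Y, hY, rfl⟩ - hYB
  rcases (Y ∩ A).eq_empty_or_nonempty with hYA | hYA
  · exact Or.inl hYA
  · have hBY : B ⊆ Y := hB.subset_of_inter_nonempty hL hY <|
      hYA.mono fun x hx => mem_inter.mpr ⟨(mem_inter.mp (hYB hx)).1, (mem_inter.mp hx).1⟩
    exact Or.inr (Subset.antisymm hYB (inter_subset_inter_right hBY))

lemma IsCnLattice.exists_atom_eq_inter {star : α → α} {E : Finset α} (h : IsCnLattice star E L)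
    (hA : A ⊆ E) {X : Finset α} (hX : IsAtomIn (traceOn L A) X) :
    ∃ B, IsAtomIn L B ∧ X = B ∩ A := by
  obtain ⟨Y, hY, rfl⟩ := hX.2.1
  obtain ⟨x, hx⟩ := empty_ssubset.mp hX.2.2.1
  obtain ⟨hxY, hxA⟩ := mem_inter.mp hx
  obtain ⟨B, hB, hxB⟩ := h.exists_atom_mem (hA hxA)
  have hBY : B ⊆ Y := hB.subset_of_inter_nonempty h.inter_mem hY ⟨x, mem_inter.mpr ⟨hxB, hxY⟩⟩
  rcases hX.2.2.2 (B ∩ A) ⟨B, hB.2.1, rfl⟩ (empty_subset _) (inter_subset_inter_right hBY)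
    with hBA | hBA
  · exact absurd hBA (nonempty_iff_ne_empty.mp ⟨x, mem_inter.mpr ⟨hxB, hxA⟩⟩)
  · exact ⟨B, hB, hBA.symm⟩

lemma IsCnLattice.atomsMeeting_traceOn {star : α → α} {E : Finset α} (h : IsCnLattice star E L)
    (hA : A ⊆ E) (hD : D ⊆ A) : atomsMeeting (traceOn L A) D = (· ∩ A) '' atomsMeeting L D := by
  ext X
  constructor
  · rintro ⟨hX, hXD⟩
    obtain ⟨B, hB, rfl⟩ := h.exists_atom_eq_inter hA hX
    exact ⟨B, ⟨hB, hXD.mono (inter_subset_inter_right inter_subset_left)⟩, rfl⟩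
  · rintro ⟨B, ⟨hB, x, hx⟩, rfl⟩
    obtain ⟨hxB, hxD⟩ := mem_inter.mp hx
    have hxBA : x ∈ B ∩ A := mem_inter.mpr ⟨hxB, hD hxD⟩
    exact ⟨hB.inter_isAtomIn_traceOn h.empty_mem h.inter_mem ⟨x, hxBA⟩, x, mem_inter.mpr ⟨hxBA, hxD⟩⟩

lemma IsCnLattice.disjointIn_traceOn_iff {star : α → α} {E : Finset α}
    (h : IsCnLattice star E L) (hA : A ⊆ E) (hD : D ⊆ A) :
    DisjointIn (traceOn L A) D ↔ DisjointIn L D := by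
  unfold DisjointIn
  rw [h.atomsMeeting_traceOn hA hD, Set.InjOn.ncard_image]
  rintro B ⟨hB, x, hx⟩ B' ⟨hB', -⟩ hBB'
  obtain ⟨hxB, hxD⟩ := mem_inter.mp hx
  have hxB' : x ∈ B' ∩ A := (show B ∩ A = B' ∩ A from hBB') ▸ mem_inter.mpr ⟨hxB, hD hxD⟩
  exact hB.eq_of_inter_nonempty h.inter_mem hB' ⟨x, mem_inter.mpr ⟨hxB, (mem_inter.mp hxB').1⟩⟩

lemma joinIn_traceOn_subset (hD : D ⊆ A) : joinIn (traceOn L A) D ⊆ joinIn L D :=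
  fun _ hx Y hY hDY => (mem_inter.mp (hx (Y ∩ A) ⟨Y, hY, rfl⟩ (subset_inter hDY hD))).1

lemma mem_joinIn_traceOn {x : α} (hxA : x ∈ A) (hx : x ∈ joinIn L D) :
    x ∈ joinIn (traceOn L A) D := by
  rintro _ ⟨Y, hY, rfl⟩ hDY
  exact mem_inter.mpr ⟨hx Y hY (hDY.trans inter_subset_left), hxA⟩

/-- The order `ω` with all of `A` moved in front of the rest. -/
def prependOrder (A : Finset α) (ω : α → α → Prop) : α → α → Prop :=
  InvImage (Prod.Lex (· < ·) ω) fun a => (decide (a ∉ A), a)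

lemma isStrictTotalOrder_prependOrder (A : Finset α) {ω : α → α → Prop}
    (hω : IsStrictTotalOrder α ω) : IsStrictTotalOrder α (prependOrder A ω) :=
  { toTrichotomous := InvImage.trichotomous fun _ _ h => (Prod.ext_iff.1 h).2
    irrefl := fun _ => irrefl_of (Prod.Lex (· < ·) ω) _
    trans := fun _ _ _ => trans_of (Prod.Lex (· < ·) ω) }

lemma prependOrder_of_mem {ω : α → α → Prop} {a b : α} (hb : b ∈ A)
    (hab : prependOrder A ω a b) : a ∈ A ∧ ω a b := by
  simpa [prependOrder, InvImage, Prod.lex_iff, hb, Bool.lt_iff] using hab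

lemma GNBB.to_traceOn {star : α → α} {E : Finset α} (h : IsCnLattice star E L) (hA : A ⊆ E)
    {ω : α → α → Prop} (hN : GNBB L ω B) (hBA : B ⊆ A) : GNBB (traceOn L A) ω B := by
  rintro D hDB ⟨hne, hdisj, a, ha, haj⟩
  have hDA := hDB.trans hBA
  exact hN D hDB ⟨hne, (h.disjointIn_traceOn_iff hA hDA).mp hdisj, a, ha,
    joinIn_traceOn_subset hDA haj⟩

lemma GNBB.of_traceOn_prependOrder {star : α → α} {E : Finset α} (h : IsCnLattice star E L) (hA : A ⊆ E)
    {ω : α → α → Prop} (hN : GNBB (traceOn L A) ω B) (hBA : B ⊆ A) :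
    GNBB L (prependOrder A ω) B := by
  rintro D hDB ⟨⟨d, hd⟩, hdisj, a, ha, haj⟩
  have hDA := hDB.trans hBA
  have haA : a ∈ A := (prependOrder_of_mem (hDA hd) (ha d hd)).1
  exact hN D hDB ⟨⟨d, hd⟩, (h.disjointIn_traceOn_iff hA hDA).mpr hdisj, a,
    fun d' hd' => (prependOrder_of_mem (hDA hd') (ha d' hd')).2, mem_joinIn_traceOn haA haj⟩

end Restriction

theorem cn_indep_restrict_general (star : α → α) (E : Finset α) (L : Set (Finset α))
    (h : IsCnLattice star E L) (A : Finset α) (hA : A ⊆ E) :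
    ∀ S : Finset α, S ⊆ A →
      (IndepIn L S ↔ IndepIn {X | ∃ Y ∈ L, X = Y ∩ A} S) := by
  intro S hS
  constructor
  · rintro ⟨ω, hω, hN⟩
    exact ⟨ω, hω, GNBB.to_traceOn h hA hN hS⟩
  · rintro ⟨ω, hω, hN⟩
    exact ⟨prependOrder A ω, isStrictTotalOrder_prependOrder A hω, GNBB.of_traceOn_prependOrder h hA hN hS⟩

/-- For any admissible subset `A` of the ground set and any `C_n`
lattice `L`, the independent sets of `L` contained in `A` coincide with the
independent sets of the restricted lattice `L ∩ A = {X ∩ A : X ∈ L}`: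
`I(L,P) ∩ P(A) = I(L ∩ A, P|_A)`. -/
theorem cn_indep_restrict (star : α → α) (E : Finset α) (L : Set (Finset α))
    (h : IsCnLattice star E L) (A : Finset α) (hA : A ⊆ E)
    (hadm : Admissible star A) :
    ∀ S : Finset α, S ⊆ A →
      (IndepIn L S ↔ IndepIn {X | ∃ Y ∈ L, X = Y ∩ A} S) :=
  cn_indep_restrict_general star E L h A hA
end
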